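/- arXiv:2201.10749 — 2 statements merged into one kernel-verified Lean document; each statement's English description precedes it below -/
import Mathlib

section
/- Let A ∈ ℝ^{2×2} with I - A² invertible, B, C ∈ ℝ^2, and step sizes u_L, u_R ∈ ℝ with u_Σ = u_L + u_R. Define x_L = (I - A²)^{-1}((A·B - B)·u_L + B·u_Σ + (A + I)·C) and x_R analogously with u_R. Then applying one step of the dynamics x ↦ A·x + B·u + C with input u_L to x_L gives x_R, and applying it with input u_R to x_R gives x_L; in particular both states are fixed points of the two-step composed map. -/
open Matrix

/-- P2 orbit: the two states `x_L, x_R` given by the closed-form expression map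
to one another under one step of the dynamics with inputs `u_L` and `u_R`
respectively; in particular each is a fixed point of the two-step composed map. -/
theorem p2_orbit_characterization
    (A : Matrix (Fin 2) (Fin 2) ℝ) (hA : IsUnit (1 - A ^ 2))
    (B C : Fin 2 → ℝ) (uL uR uSum : ℝ) (hSum : uSum = uL + uR)
    (xL xR : Fin 2 → ℝ)
    (hxL : xL = (1 - A ^ 2)⁻¹ *ᵥ (uL • (A *ᵥ B - B) + uSum • B + (A + 1) *ᵥ C))
    (hxR : xR = (1 - A ^ 2)⁻¹ *ᵥ (uR • (A *ᵥ B - B) + uSum • B + (A + 1) *ᵥ C)) :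
    (A *ᵥ xL + uL • B + C = xR) ∧ (A *ᵥ xR + uR • B + C = xL) ∧
    (A *ᵥ (A *ᵥ xL + uL • B + C) + uR • B + C = xL) ∧
    (A *ᵥ (A *ᵥ xR + uR • B + C) + uL • B + C = xR) := by
  set M : Matrix (Fin 2) (Fin 2) ℝ := 1 - A ^ 2 with hM
  have hdet : IsUnit M.det := (Matrix.isUnit_iff_isUnit_det M).mp hA
  have hcomm : M * (A * M⁻¹) = A := by
    have h1 : A * M = M * A := by rw [hM]; noncomm_ring
    calc M * (A * M⁻¹) = M * A * M⁻¹ := by rw [mul_assoc]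
      _ = A * M * M⁻¹ := by rw [h1]
      _ = A * (M * M⁻¹) := by rw [mul_assoc]
      _ = A := by rw [Matrix.mul_nonsing_inv M hdet, mul_one]
  have hinj : ∀ w y : Fin 2 → ℝ, M *ᵥ w = y → w = M⁻¹ *ᵥ y := by
    intro w y h
    rw [← h, Matrix.mulVec_mulVec, Matrix.nonsing_inv_mul M hdet, Matrix.one_mulVec]
  have key : ∀ a b : ℝ, uSum = a + b →
      A *ᵥ (M⁻¹ *ᵥ (a • (A *ᵥ B - B) + uSum • B + (A + 1) *ᵥ C)) + a • B + C
        = M⁻¹ *ᵥ (b • (A *ᵥ B - B) + uSum • B + (A + 1) *ᵥ C) := by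
    intro a b hab
    apply hinj
    subst hab
    rw [Matrix.mulVec_add, Matrix.mulVec_add, Matrix.mulVec_mulVec,
      Matrix.mulVec_mulVec, Matrix.mul_assoc, hcomm]
    simp only [Matrix.mulVec_add, Matrix.mulVec_smul, Matrix.mulVec_sub,
      Matrix.sub_mulVec, Matrix.add_mulVec, Matrix.one_mulVec, hM,
      pow_two, ← Matrix.mulVec_mulVec]
    module
  have h1 := key uL uR hSum
  have h2 := key uR uL (by rw [hSum]; ring)
  rw [hxL, hxR]
  exact ⟨h1, h2, by rw [h1, h2], by rw [h2, h1]⟩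
end

section
/- Let Φ_x[1], ..., Φ_x[N_F] and Φ_u[1], ..., Φ_u[N_F] be FIR closed-loop response matrices. Suppose for given constraint data H[i], h[i], G[j], g[j] there exist matrices Λ[i,j] with nonnegative entries such that H[i]·Φ[i−j] = Λ[i,j]·G[j] and Σ_{j=0}^{i−1} Λ[i,j]·g[j] ≤ h[i] for all 1 ≤ i ≤ N_F, 0 ≤ j ≤ i−1, where Φ[k] stacks Φ_x[k] and Φ_u[k]. Then for every disturbance sequence with G[j]·w_j ≤ g[j] for all j, the closed-loop signal [x_i; u_i] = Σ_{j=0}^{i−1} Φ[i−j]·w_j satisfies H[i]·[x_i; u_i] ≤ h[i] for all 1 ≤ i ≤ N_F. -/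
open Matrix Finset

/-- Robust constraint satisfaction in constrained SLS: if nonnegative
multipliers `Λ[i,j]` certify `H[i]·Φ[i−j] = Λ[i,j]·G[j]` and
`Σ_j Λ[i,j]·g[j] ≤ h[i]`, then for every disturbance with `G[j]·w_j ≤ g[j]`,
the closed-loop signal `[x_i; u_i] = Σ_{j=0}^{i−1} Φ[i−j]·w_j` satisfies
`H[i]·[x_i; u_i] ≤ h[i]` for `1 ≤ i ≤ N_F`. -/
theorem sls_robust_constraint_satisfaction
    (n m r s NF : ℕ)
    (Phi : ℕ → Matrix (Fin (n + m)) (Fin n) ℝ)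
    (H : ℕ → Matrix (Fin r) (Fin (n + m)) ℝ) (h : ℕ → Fin r → ℝ)
    (G : ℕ → Matrix (Fin s) (Fin n) ℝ) (g : ℕ → Fin s → ℝ)
    (Lam : ℕ → ℕ → Matrix (Fin r) (Fin s) ℝ)
    (hLamNonneg : ∀ i j, 1 ≤ i → i ≤ NF → j ≤ i - 1 → ∀ a b, 0 ≤ Lam i j a b)
    (hEq : ∀ i j, 1 ≤ i → i ≤ NF → j ≤ i - 1 → H i * Phi (i - j) = Lam i j * G j)
    (hIneq : ∀ i, 1 ≤ i → i ≤ NF → ∑ j ∈ range i, Lam i j *ᵥ g j ≤ h i)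
    (w : ℕ → Fin n → ℝ)
    (hw : ∀ j, G j *ᵥ w j ≤ g j) :
    ∀ i, 1 ≤ i → i ≤ NF →
      H i *ᵥ (∑ j ∈ range i, Phi (i - j) *ᵥ w j) ≤ h i := by
  intro i hi1 hiNF
  have key : H i *ᵥ (∑ j ∈ range i, Phi (i - j) *ᵥ w j)
      ≤ ∑ j ∈ range i, Lam i j *ᵥ g j := by
    rw [show H i *ᵥ (∑ j ∈ range i, Phi (i - j) *ᵥ w j)
        = ∑ j ∈ range i, H i *ᵥ (Phi (i - j) *ᵥ w j) from
      map_sum (Matrix.mulVecLin (H i)) _ _]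
    apply Finset.sum_le_sum
    intro j hj
    have hji : j ≤ i - 1 := Nat.le_sub_one_of_lt (Finset.mem_range.mp hj)
    rw [Matrix.mulVec_mulVec, hEq i j hi1 hiNF hji, ← Matrix.mulVec_mulVec]
    intro a
    simp only [Matrix.mulVec, dotProduct]
    apply Finset.sum_le_sum
    intro b _
    exact mul_le_mul_of_nonneg_left (hw j b) (hLamNonneg i j hi1 hiNF hji a b)
  exact le_trans key (hIneq i hi1 hiNF)
end
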